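/- arXiv:2005.13606 — 3 statements merged into one kernel-verified Lean document; each statement's English description precedes it below -/
import Mathlib

section
/- Let K be a field, n a natural number, m ≥ 1, and let x, y : Fin (n+1) → K be nonzero vectors. Suppose there is a nonzero λ ∈ K such that for every exponent vector e : Fin (n+1) → ℕ with ∑ i, e i = m one has ∏ i, (x i)^(e i) = λ · ∏ i, (y i)^(e i). Then there exists a nonzero scalar μ ∈ K with x = μ • y. -/
lemma prod_pow_single {K : Type*} [Field K] {N : ℕ} (f : Fin N → K) (j : Fin N) (k : ℕ) :
    (∏ i, f i ^ (Pi.single j k : Fin N → ℕ) i) = f j ^ k := by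
  rw [Finset.prod_eq_single j]
  · simp
  · intro i _ hi; simp [Pi.single_eq_of_ne hi]
  · simp

theorem veronese_injective {K : Type*} [Field K] (n m : ℕ) (hm : 1 ≤ m)
    (x y : Fin (n + 1) → K) (hx : x ≠ 0) (hy : y ≠ 0)
    (lam : K) (hlam : lam ≠ 0)
    (h : ∀ e : Fin (n + 1) → ℕ, (∑ i, e i) = m →
      (∏ i, x i ^ e i) = lam * ∏ i, y i ^ e i) :
    ∃ μ : K, μ ≠ 0 ∧ x = μ • y := by
  obtain ⟨i₀, hy0⟩ := Function.ne_iff.mp hy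
  simp only [Pi.zero_apply] at hy0
  have hsum : ∀ j : Fin (n+1), (∑ i, ((Pi.single j 1 + Pi.single i₀ (m-1) : Fin (n+1) → ℕ)) i) = m := by
    intro j
    simp [Finset.sum_add_distrib, Finset.sum_pi_single]
    omega
  have key : ∀ j : Fin (n+1), x j * x i₀ ^ (m-1) = lam * (y j * y i₀ ^ (m-1)) := by
    intro j
    have := h _ (hsum j)
    simpa [pow_add, Finset.prod_mul_distrib, prod_pow_single] using this
  have hx0 : x i₀ ≠ 0 := by
    intro hz
    have := key i₀
    rw [hz, zero_mul] at this
    exact (mul_ne_zero hlam (mul_ne_zero hy0 (pow_ne_zero _ hy0))) this.symm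
  refine ⟨x i₀ / y i₀, div_ne_zero hx0 hy0, ?_⟩
  funext j
  have k1 := key j
  have k2 := key i₀
  have hp : (x i₀ : K) ^ (m-1) ≠ 0 := pow_ne_zero _ hx0
  have heq : x j * y i₀ = x i₀ * y j :=
    mul_right_cancel₀ hp (by linear_combination y i₀ * k1 - y j * k2)
  simp only [Pi.smul_apply, smul_eq_mul]
  rw [div_mul_eq_mul_div, eq_div_iff hy0]
  linear_combination heq
end

section
/- Let K be a field and m a positive natural number. Let E be the set of exponent vectors e : Fin 4 → ℕ with ∑ i, e i = m, and let ψ be the linear map from the space of homogeneous degree-2 polynomials in variables (Z_e)_{e ∈ E} over K to the space of homogeneous degree-2m polynomials in K[X₀, X₁, X₂, X₃], induced by the substitution Z_e ↦ X₀^(e 0) X₁^(e 1) X₂^(e 2) X₃^(e 3). Then the kernel of ψ has K-dimension C(C(m+3,3)+1, 2) − C(2m+3,3), where C(a,b) denotes the binomial coefficient. -/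
/-!
The substitution `ψ` sends the quadratic monomial `Z_e Z_f` to the monomial `X^(e + f)`, and every
exponent vector of degree `2m` splits as `e + f` with both parts of degree `m`. Hence `ψ` maps the
quadratic forms in the `C(m+3,3)` variables `Z_e` onto the forms of degree `2m` in four variables,
and rank–nullity gives the dimension of the kernel.
-/

open MvPolynomial

theorem LinearMap.finrank_ker_inf_add_finrank_map {K V W : Type*} [DivisionRing K]
    [AddCommGroup V] [Module K V] [AddCommGroup W] [Module K W]
    (f : V →ₗ[K] W) (p : Submodule K V) [FiniteDimensional K p] :
    Module.finrank K ↥(LinearMap.ker f ⊓ p) + Module.finrank K (p.map f) =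
      Module.finrank K p := by
  rw [← (f.domRestrict p).finrank_range_add_finrank_ker, LinearMap.range_domRestrict,
    LinearMap.ker_domRestrict, add_comm]
  congr 1
  rw [← Submodule.finrank_map_subtype_eq, Submodule.map_comap_subtype, inf_comm]

namespace MvPolynomial

section Homogeneous

variable {σ K : Type*} [Field K]

instance [Finite σ] (n : ℕ) : Module.Finite K (homogeneousSubmodule σ K n) :=
  Module.Finite.iff_fg.mpr (homogeneousSubmodule_fg σ K n)

theorem finrank_homogeneousSubmodule [Finite σ] (n : ℕ) :
    Module.finrank K (homogeneousSubmodule σ K n) = (Nat.card σ + n - 1).choose n := by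
  classical
  rw [homogeneousSubmodule_eq_finsupp_supported, ← Sym.natCard_sym_eq_choose]
  refine (Module.finrank_eq_nat_card_basis
    (basisRestrictSupport K {d : σ →₀ ℕ | d.degree = n})).trans ?_
  exact Nat.card_congr
    ((Sym.equivNatSum σ n).trans (Equiv.subtypeEquivRight fun _ => Iff.rfl)).symm

end Homogeneous

section Veronese

variable (σ K : Type*) [Fintype σ] [Field K]

instance (m : ℕ) : Finite {e : σ → ℕ // ∑ i, e i = m} := by
  classical exact .of_equiv _ (Sym.equivNatSumOfFintype σ m)

theorem natCard_subtype_sum_eq (m : ℕ) :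
    Nat.card {e : σ → ℕ // ∑ i, e i = m} = (Fintype.card σ + m - 1).choose m := by
  classical
  rw [← Nat.card_congr (Sym.equivNatSumOfFintype σ m), Sym.natCard_sym_eq_choose,
    Nat.card_eq_fintype_card]

noncomputable def veronese (m : ℕ) :
    MvPolynomial {e : σ → ℕ // ∑ i, e i = m} K →ₐ[K] MvPolynomial σ K :=
  aeval fun e => ∏ i, X i ^ (e : σ → ℕ) i

variable {σ K}

theorem prod_X_pow_eq_monomial_of_fintype (d : σ →₀ ℕ) :
    ∏ i, (X i : MvPolynomial σ K) ^ d i = monomial d 1 := by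
  classical
  rw [← prod_X_pow_eq_monomial]
  exact (Finsupp.prod_fintype _ _ fun i => pow_zero _).symm

theorem isHomogeneous_prod_X_pow (e : σ → ℕ) :
    (∏ i, (X i : MvPolynomial σ K) ^ e i).IsHomogeneous (∑ i, e i) :=
  IsHomogeneous.prod _ _ _ fun i _ => isHomogeneous_X_pow i _

theorem veronese_X_mk {m : ℕ} (d : σ →₀ ℕ) (hd : ∑ i, d i = m) :
    veronese σ K m (X ⟨d, hd⟩) = monomial d 1 := by
  rw [veronese, aeval_X, prod_X_pow_eq_monomial_of_fintype]

theorem monomial_mem_map_veronese {m : ℕ} :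
    ∀ (k : ℕ) (d : σ →₀ ℕ), d.degree = k * m →
      monomial d 1 ∈ (homogeneousSubmodule _ K k).map (veronese σ K m).toLinearMap
  | 0, d, hd => ⟨1, isHomogeneous_one _ _, by simp_all [Finsupp.degree_eq_zero_iff]⟩
  | k + 1, d, hd => by
    obtain ⟨a, had, ha⟩ := d.exists_le_degree_eq m (by rw [hd]; nlinarith)
    obtain ⟨b, rfl⟩ := le_iff_exists_add.mp had
    obtain ⟨q, hq, hqb⟩ := monomial_mem_map_veronese (m := m) k b (by
      rw [map_add, ha, add_mul, one_mul] at hd; linarith)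
    refine ⟨X ⟨a, by rwa [← Finsupp.degree_eq_sum]⟩ * q, ?_, ?_⟩
    · simpa [add_comm] using (isHomogeneous_X K _).mul hq
    · simp_all [veronese_X_mk, monomial_mul]

theorem map_veronese_homogeneousSubmodule (m k : ℕ) :
    (homogeneousSubmodule _ K k).map (veronese σ K m).toLinearMap =
      homogeneousSubmodule σ K (k * m) := by
  apply le_antisymm
  · rintro _ ⟨p, hp, rfl⟩
    rw [mul_comm]
    exact hp.aeval _ fun e => by simpa only [e.2] using isHomogeneous_prod_X_pow (K := K) e.1
  · rw [homogeneousSubmodule_eq_finsupp_supported, AddMonoidAlgebra.supported_eq_span_single,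
      Submodule.span_le]
    rintro _ ⟨d, hd, rfl⟩
    exact monomial_mem_map_veronese k d hd

end Veronese

end MvPolynomial

theorem veronese_quadrics_kernel_dim_general {K : Type*} [Field K] (m : ℕ) :
    Module.finrank K
        ↥(LinearMap.ker
            (aeval (fun e : {e : Fin 4 → ℕ // ∑ i, e i = m} =>
              ∏ i, (X i : MvPolynomial (Fin 4) K) ^ (e : Fin 4 → ℕ) i)).toLinearMap ⊓
          homogeneousSubmodule {e : Fin 4 → ℕ // ∑ i, e i = m} K 2) =
      Nat.choose (Nat.choose (m + 3) 3 + 1) 2 - Nat.choose (2 * m + 3) 3 := by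
  have card_vars : Nat.card {e : Fin 4 → ℕ // ∑ i, e i = m} = (m + 3).choose 3 := by
    rw [natCard_subtype_sum_eq, Fintype.card_fin, show 4 + m - 1 = m + 3 by omega,
      Nat.choose_symm_add]
  have finrank_quadrics :
      Module.finrank K (homogeneousSubmodule {e : Fin 4 → ℕ // ∑ i, e i = m} K 2) =
        ((m + 3).choose 3 + 1).choose 2 := by
    rw [finrank_homogeneousSubmodule, card_vars]
    rfl
  have finrank_target : Module.finrank K (homogeneousSubmodule (Fin 4) K (2 * m)) =
      (2 * m + 3).choose 3 := by
    rw [finrank_homogeneousSubmodule, Nat.card_fin, show 4 + 2 * m - 1 = 2 * m + 3 by omega,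
      Nat.choose_symm_add]
  have rank_nullity := (veronese (Fin 4) K m).toLinearMap.finrank_ker_inf_add_finrank_map
    (homogeneousSubmodule _ K 2)
  rw [map_veronese_homogeneousSubmodule, finrank_quadrics, finrank_target] at rank_nullity
  change Module.finrank K ↥(LinearMap.ker (veronese (Fin 4) K m).toLinearMap ⊓ _) = _
  omega

theorem veronese_quadrics_kernel_dim {K : Type*} [Field K] (m : ℕ) (hm : 0 < m) :
    Module.finrank K
        ↥(LinearMap.ker
            (aeval (fun e : {e : Fin 4 → ℕ // ∑ i, e i = m} =>
              ∏ i, (X i : MvPolynomial (Fin 4) K) ^ (e : Fin 4 → ℕ) i)).toLinearMap ⊓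
          homogeneousSubmodule {e : Fin 4 → ℕ // ∑ i, e i = m} K 2) =
      Nat.choose (Nat.choose (m + 3) 3 + 1) 2 - Nat.choose (2 * m + 3) 3 :=
  veronese_quadrics_kernel_dim_general m
end

section
/- Let K be an algebraically closed field and m a positive natural number. Let E be the set of exponent vectors e : Fin 4 → ℕ with ∑ i, e i = m, and let z : E → K be a function, not identically zero, such that z e · z f = z g · z h for all e, f, g, h ∈ E with e + f = g + h (pointwise sum). Then there exists a vector x : Fin 4 → K such that z e = ∏ i, (x i)^(e i) for every e ∈ E. -/
namespace VeroneseAux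

def Vtx (m : ℕ) (i₀ : Fin 4) : Fin 4 → ℕ := fun j => if j = i₀ then m else 0

def Uvec (m : ℕ) (i₀ i : Fin 4) : Fin 4 → ℕ :=
  fun j => (if j = i₀ then m - 1 else 0) + (if j = i then 1 else 0)

lemma Vtx_sum (m : ℕ) (i₀ : Fin 4) : ∑ j, Vtx m i₀ j = m := by
  simp [Vtx, Finset.sum_ite_eq']

lemma Uvec_sum (m : ℕ) (hm : 0 < m) (i₀ i : Fin 4) : ∑ j, Uvec m i₀ i j = m := by
  simp [Uvec, Finset.sum_add_distrib, Finset.sum_ite_eq']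
  omega

lemma Uvec_self (m : ℕ) (hm : 0 < m) (i₀ : Fin 4) : Uvec m i₀ i₀ = Vtx m i₀ := by
  funext j
  simp only [Uvec, Vtx]
  split <;> omega

lemma vertex_eq (m : ℕ) (e : Fin 4 → ℕ) (he : ∑ j, e j = m) (i₀ : Fin 4)
    (h : e i₀ = m) : e = Vtx m i₀ := by
  funext j
  simp only [Vtx]
  rw [Fin.sum_univ_four] at he
  fin_cases i₀ <;> fin_cases j <;> simp_all <;> omega

lemma exists_pos (m : ℕ) (e : Fin 4 → ℕ) (he : ∑ j, e j = m) (i₀ : Fin 4)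
    (h : e i₀ < m) : ∃ j, j ≠ i₀ ∧ 0 < e j := by
  by_contra hc
  push_neg at hc
  have hz : ∀ j, j ≠ i₀ → e j = 0 := fun j hj => by have := hc j hj; omega
  have : ∑ j, e j = e i₀ :=
    Finset.sum_eq_single_of_mem i₀ (Finset.mem_univ i₀) (fun b _ hb => hz b hb)
  omega

lemma shift_sum (m : ℕ) (e : Fin 4 → ℕ) (he : ∑ k, e k = m) (i₀ j : Fin 4)
    (hij : j ≠ i₀) (hj : 0 < e j) :
    ∑ k, (if k = i₀ then e i₀ + 1 else if k = j then e j - 1 else e k) = m := by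
  rw [Fin.sum_univ_four] at he ⊢
  fin_cases i₀ <;> fin_cases j <;> simp_all <;> omega

end VeroneseAux

open VeroneseAux in
theorem veronese_quadratic_relations {K : Type*} [Field K] [IsAlgClosed K]
    (m : ℕ) (hm : 0 < m)
    (z : {e : Fin 4 → ℕ // ∑ i, e i = m} → K) (hz : z ≠ 0)
    (hrel : ∀ e f g h : {e : Fin 4 → ℕ // ∑ i, e i = m},
      (e : Fin 4 → ℕ) + (f : Fin 4 → ℕ) = (g : Fin 4 → ℕ) + (h : Fin 4 → ℕ) →
        z e * z f = z g * z h) :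
    ∃ x : Fin 4 → K, ∀ e : {e : Fin 4 → ℕ // ∑ i, e i = m},
      z e = ∏ i, x i ^ (e : Fin 4 → ℕ) i := by
  -- find e₀ with z e₀ ≠ 0
  obtain ⟨e₀, he₀⟩ : ∃ e, z e ≠ 0 := by
    by_contra hc
    push_neg at hc
    exact hz (funext fun e => by simpa using hc e)
  -- find i₀ with e₀ i₀ > 0
  obtain ⟨i₀, hi₀⟩ : ∃ i, 0 < (e₀ : Fin 4 → ℕ) i := by
    by_contra hc
    push_neg at hc
    have h2 := e₀.2
    have h1 : ∑ i, (e₀ : Fin 4 → ℕ) i = 0 :=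
      Finset.sum_eq_zero (fun i _ => by have := hc i; omega)
    omega
  have hle : ∀ (e : {e : Fin 4 → ℕ // ∑ i, e i = m}) (i : Fin 4),
      (e : Fin 4 → ℕ) i ≤ m := by
    intro e i
    calc (e : Fin 4 → ℕ) i ≤ ∑ j, (e : Fin 4 → ℕ) j :=
      Finset.single_le_sum (fun j _ => Nat.zero_le _) (Finset.mem_univ i)
    _ = m := e.2
  set V : {e : Fin 4 → ℕ // ∑ i, e i = m} := ⟨Vtx m i₀, Vtx_sum m i₀⟩ with hV
  set U : Fin 4 → {e : Fin 4 → ℕ // ∑ i, e i = m} :=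
    fun i => ⟨Uvec m i₀ i, Uvec_sum m hm i₀ i⟩ with hU
  -- Lemma D : z V ≠ 0
  have keyD : ∀ n (e : {e : Fin 4 → ℕ // ∑ i, e i = m}),
      m - (e : Fin 4 → ℕ) i₀ = n → z e ≠ 0 →
      0 < (e : Fin 4 → ℕ) i₀ → z V ≠ 0 := by
    intro n
    induction n with
    | zero =>
      intro e hn hze _
      have h1 : (e : Fin 4 → ℕ) i₀ = m := by have := hle e i₀; omega
      have h2 : e = V := Subtype.ext (vertex_eq m _ e.2 i₀ h1)
      rwa [← h2]
    | succ n ih =>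
      intro e hn hze hpos
      have hlt : (e : Fin 4 → ℕ) i₀ < m := by have := hle e i₀; omega
      obtain ⟨j, hj, hjpos⟩ := exists_pos m _ e.2 i₀ hlt
      set e' : Fin 4 → ℕ := fun k =>
        if k = i₀ then (e : Fin 4 → ℕ) i₀ + 1
        else if k = j then (e : Fin 4 → ℕ) j - 1 else (e : Fin 4 → ℕ) k with he'
      set e'' : Fin 4 → ℕ := fun k =>
        if k = j then (e : Fin 4 → ℕ) j + 1
        else if k = i₀ then (e : Fin 4 → ℕ) i₀ - 1 else (e : Fin 4 → ℕ) k with he''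
      have hsum' : ∑ k, e' k = m := shift_sum m _ e.2 i₀ j hj hjpos
      have hsum'' : ∑ k, e'' k = m :=
        shift_sum m _ e.2 j i₀ (Ne.symm hj) hpos
      have hrel1 : z e * z e = z ⟨e', hsum'⟩ * z ⟨e'', hsum''⟩ := by
        apply hrel
        funext k
        simp only [Pi.add_apply, he', he'']
        by_cases h1 : k = i₀
        · subst h1; simp [Ne.symm hj]; omega
        · by_cases h2 : k = j
          · subst h2; simp [h1, hj]; omega
          · simp [h1, h2]
      have hz' : z ⟨e', hsum'⟩ ≠ 0 := by
        intro h
        rw [h, zero_mul] at hrel1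
        exact hze (mul_self_eq_zero.mp hrel1)
      have hco : e' i₀ = (e : Fin 4 → ℕ) i₀ + 1 := by simp [he']
      exact ih ⟨e', hsum'⟩ (by simpa [hco] using by omega) hz' (by simp [hco])
  have hVne : z V ≠ 0 := keyD (m - (e₀ : Fin 4 → ℕ) i₀) e₀ rfl he₀ hi₀
  -- Lemma B
  have keyB : ∀ n (e : {e : Fin 4 → ℕ // ∑ i, e i = m}),
      m - (e : Fin 4 → ℕ) i₀ = n →
      z V ^ (m - 1) * z e = ∏ i, z (U i) ^ (e : Fin 4 → ℕ) i := by
    intro n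
    induction n with
    | zero =>
      intro e hn
      have hvm : (e : Fin 4 → ℕ) i₀ = m := by have := hle e i₀; omega
      have heV : e = V := Subtype.ext (vertex_eq m _ e.2 i₀ hvm)
      subst heV
      have hexp : ∀ i, (V : Fin 4 → ℕ) i = if i = i₀ then m else 0 := fun i => rfl
      rw [Finset.prod_congr rfl (fun i _ => by rw [hexp i])]
      have hsplit : ∀ i : Fin 4, z (U i) ^ (if i = i₀ then m else 0)
          = if i = i₀ then z (U i) ^ m else 1 := by
        intro i; split <;> simp
      rw [Finset.prod_congr rfl (fun i _ => hsplit i), Finset.prod_ite_eq' Finset.univ i₀]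
      simp only [Finset.mem_univ, if_true]
      have hUV : U i₀ = V := Subtype.ext (Uvec_self m hm i₀)
      rw [hUV]
      conv_rhs => rw [show m = (m - 1) + 1 by omega]
      rw [pow_succ]
    | succ n ih =>
      intro e hn
      have hlt : (e : Fin 4 → ℕ) i₀ < m := by have := hle e i₀; omega
      obtain ⟨j, hj, hjpos⟩ := exists_pos m _ e.2 i₀ hlt
      set e' : Fin 4 → ℕ := fun k =>
        if k = i₀ then (e : Fin 4 → ℕ) i₀ + 1
        else if k = j then (e : Fin 4 → ℕ) j - 1 else (e : Fin 4 → ℕ) k with he'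
      have hsum' : ∑ k, e' k = m := shift_sum m _ e.2 i₀ j hj hjpos
      have hrel1 : z e * z V = z ⟨e', hsum'⟩ * z (U j) := by
        apply hrel
        funext k
        simp only [Pi.add_apply, he', hV, hU, Vtx, Uvec]
        by_cases h1 : k = i₀
        · subst h1; simp [Ne.symm hj]; omega
        · by_cases h2 : k = j
          · subst h2; simp [h1, hj]; omega
          · simp [h1, h2]
      have hco : e' i₀ = (e : Fin 4 → ℕ) i₀ + 1 := by simp [he']
      have ihe' : z V ^ (m - 1) * z ⟨e', hsum'⟩ = ∏ i, z (U i) ^ e' i :=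
        ih ⟨e', hsum'⟩ (by simpa [hco] using by omega)
      have hprod : (∏ i, z (U i) ^ e' i) * z (U j)
          = (∏ i, z (U i) ^ (e : Fin 4 → ℕ) i) * z (U i₀) := by
        have l1 : z (U j) = ∏ i, z (U i) ^ (if i = j then 1 else 0) := by
          rw [Finset.prod_congr rfl
            (fun i _ => by rw [show z (U i) ^ (if i = j then 1 else 0)
              = if i = j then z (U i) ^ 1 else 1 from by split <;> simp]),
            Finset.prod_ite_eq' Finset.univ j]
          simp
        have l2 : z (U i₀) = ∏ i, z (U i) ^ (if i = i₀ then 1 else 0) := by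
          rw [Finset.prod_congr rfl
            (fun i _ => by rw [show z (U i) ^ (if i = i₀ then 1 else 0)
              = if i = i₀ then z (U i) ^ 1 else 1 from by split <;> simp]),
            Finset.prod_ite_eq' Finset.univ i₀]
          simp
        rw [l1, l2, ← Finset.prod_mul_distrib, ← Finset.prod_mul_distrib]
        apply Finset.prod_congr rfl
        intro i _
        rw [← pow_add, ← pow_add]
        congr 1
        simp only [he']
        by_cases h1 : i = i₀
        · subst h1; simp [Ne.symm hj]
        · by_cases h2 : i = j
          · subst h2; simp [h1, hj]; omega
          · simp [h1, h2]
      have main : (z V ^ (m - 1) * z e) * z V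
          = (∏ i, z (U i) ^ (e : Fin 4 → ℕ) i) * z V := by
        calc (z V ^ (m - 1) * z e) * z V = z V ^ (m - 1) * (z e * z V) := by ring
        _ = z V ^ (m - 1) * (z ⟨e', hsum'⟩ * z (U j)) := by rw [hrel1]
        _ = (z V ^ (m - 1) * z ⟨e', hsum'⟩) * z (U j) := by ring
        _ = (∏ i, z (U i) ^ e' i) * z (U j) := by rw [ihe']
        _ = (∏ i, z (U i) ^ (e : Fin 4 → ℕ) i) * z (U i₀) := hprod
        _ = (∏ i, z (U i) ^ (e : Fin 4 → ℕ) i) * z V := by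
              rw [show U i₀ = V from Subtype.ext (Uvec_self m hm i₀)]
      exact mul_right_cancel₀ hVne main
  -- conclude
  obtain ⟨μ, hμ⟩ := IsAlgClosed.exists_pow_nat_eq (z V) hm
  refine ⟨fun i => μ * z (U i) * (z V)⁻¹, fun e => ?_⟩
  have hB := keyB (m - (e : Fin 4 → ℕ) i₀) e rfl
  have hsum := e.2
  have hVpow : z V ^ (m - 1) ≠ 0 := pow_ne_zero _ hVne
  calc z e = (z V ^ (m-1) * z e) * (z V ^ (m-1))⁻¹ := by
        field_simp
  _ = (∏ i, z (U i) ^ (e : Fin 4 → ℕ) i) * (z V ^ (m-1))⁻¹ := by rw [hB]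
  _ = ∏ i, (μ * z (U i) * (z V)⁻¹) ^ (e : Fin 4 → ℕ) i := by
        simp only [mul_pow]
        rw [Finset.prod_mul_distrib, Finset.prod_mul_distrib,
          Finset.prod_pow_eq_pow_sum, Finset.prod_pow_eq_pow_sum, hsum,
          ← inv_pow, hμ]
        rw [show (z V : K)⁻¹ ^ m = (z V)⁻¹ ^ (m - 1) * (z V)⁻¹ from by
          rw [← pow_succ, show m - 1 + 1 = m from by omega]]
        rw [show (z V * ∏ x, z (U x) ^ (e : Fin 4 → ℕ) x) * ((z V)⁻¹ ^ (m-1) * (z V)⁻¹)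
            = (z V * (z V)⁻¹) * ((∏ x, z (U x) ^ (e : Fin 4 → ℕ) x) * (z V)⁻¹ ^ (m-1)) from by
          ring]
        rw [mul_inv_cancel₀ hVne, one_mul]
end
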